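/- arXiv:2405.00439 — 9 statements merged into one kernel-verified Lean document; each statement's English description precedes it below -/
import Mathlib

section
/- Let G be a group acting on a set I, let ω : G×G×G → ℂˣ, let L : I×G×G → ℂˣ be normalized L-symbols satisfying the coupled pentagon equation with respect to ω, and let B : G×I×I → ℂˣ satisfy the domain-wall fractionalization equation with respect to L. Then for every g ∈ G of finite order n (i.e. n ≥ 1 is minimal with gⁿ = e) and every x ∈ I, the domain-wall exchange phase satisfies ∏_{i=1}^{n} B^g_{gⁱ·x, g^{i−1}·x} = ∏_{i=1}^{n−1} L^{g·x}_{g,gⁱ} / L^{x}_{g,gⁱ} = ∏_{i=1}^{n} ω(g,gⁱ,g)^{−1}. In particular this product is independent of the point x ∈ I. -/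
/-- The domain-wall exchange phase equals the L-symbol ratio product
and the inverse-3-cocycle product; in particular it is independent of `x`. -/
theorem domain_wall_exchange_phase {G : Type*} [Group G] {I : Type*} [MulAction G I]
    (ω : G → G → G → ℂˣ) (L : I → G → G → ℂˣ) (B : G → I → I → ℂˣ)
    (hLnorm : ∀ (x : I) (g : G), L x g 1 = 1 ∧ L x 1 g = 1)
    (hpent : ∀ (g h k : G) (x : I),
      L x h k * L x g (h * k) = ω g h k * L (k • x) g h * L x (g * h) k)
    (hfrac : ∀ (g h : G) (x y : I),
      B g (h • x) (h • y) * B h x y = (L x g h / L y g h) * B (g * h) x y)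
    (g : G) (n : ℕ) (hn : 1 ≤ n) (hgn : g ^ n = 1)
    (hmin : ∀ m : ℕ, 1 ≤ m → m < n → g ^ m ≠ 1) (x : I) :
    (∏ i ∈ Finset.range n, B g (g ^ (i + 1) • x) (g ^ i • x))
        = (∏ i ∈ Finset.range (n - 1),
            (L (g • x) g (g ^ (i + 1)) / L x g (g ^ (i + 1))))
      ∧ (∏ i ∈ Finset.range n, B g (g ^ (i + 1) • x) (g ^ i • x))
        = (∏ i ∈ Finset.range n, (ω g (g ^ (i + 1)) g)⁻¹) := by
  obtain ⟨m, rfl⟩ : ∃ m, n = m + 1 := ⟨n - 1, (Nat.succ_pred_eq_of_pos hn).symm⟩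
  -- ω with middle argument 1 is trivial
  have hω1 : ∀ k : G, ω g 1 k = 1 := by
    intro k
    have h := hpent g 1 k x
    rw [(hLnorm x k).2, one_mul, one_mul, (hLnorm (k • x) g).1, mul_one, mul_one] at h
    exact (right_eq_mul.mp h)
  -- each B-term as L-ratio times telescoping quotient
  have hterm : ∀ i : ℕ, B g (g ^ (i + 1) • x) (g ^ i • x)
      = (L (g • x) g (g ^ i) / L x g (g ^ i))
        * (B (g ^ (i + 1)) (g • x) x / B (g ^ i) (g • x) x) := by
    intro i
    have h := hfrac g (g ^ i) (g • x) x
    rw [smul_smul, ← pow_succ, ← pow_succ'] at h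
    calc B g (g ^ (i + 1) • x) (g ^ i • x)
        = B g (g ^ (i + 1) • x) (g ^ i • x) * B (g ^ i) (g • x) x / B (g ^ i) (g • x) x := by
          rw [mul_div_cancel_right]
      _ = (L (g • x) g (g ^ i) / L x g (g ^ i)) * B (g ^ (i + 1)) (g • x) x
            / B (g ^ i) (g • x) x := by rw [h]
      _ = _ := mul_div_assoc _ _ _
  have hP : (∏ i ∈ Finset.range (m + 1), B g (g ^ (i + 1) • x) (g ^ i • x))
      = ∏ i ∈ Finset.range (m + 1), (L (g • x) g (g ^ i) / L x g (g ^ i)) := by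
    simp_rw [hterm]
    have ht : (∏ i ∈ Finset.range (m + 1),
        (B (g ^ (i + 1)) (g • x) x / B (g ^ i) (g • x) x))
        = B (g ^ (m + 1)) (g • x) x / B (g ^ 0) (g • x) x :=
      Finset.prod_range_div (fun j => B (g ^ j) (g • x) x) (m + 1)
    rw [Finset.prod_mul_distrib, ht, hgn, pow_zero, div_self', mul_one]
  -- first equality: drop the i = 0 term (which is 1)
  have h1 : (∏ i ∈ Finset.range (m + 1), B g (g ^ (i + 1) • x) (g ^ i • x))
      = ∏ i ∈ Finset.range (m + 1 - 1),
          (L (g • x) g (g ^ (i + 1)) / L x g (g ^ (i + 1))) := by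
    rw [hP, Finset.prod_range_succ']
    simp [(hLnorm (g • x) g).1, (hLnorm x g).1]
  refine ⟨h1, ?_⟩
  -- pentagon gives each L-ratio in terms of ω and telescoping quotients
  have hratio : ∀ i : ℕ, (L (g • x) g (g ^ i) / L x g (g ^ i))
      = (ω g (g ^ i) g)⁻¹ * (L x (g ^ i) g / L x (g ^ (i + 1)) g)
          * (L x g (g ^ (i + 1)) / L x g (g ^ i)) := by
    intro i
    have h := hpent g (g ^ i) g x
    rw [← pow_succ, ← pow_succ'] at h
    have h' := congrArg Units.val h
    apply Units.ext
    simp only [Units.val_mul, Units.val_div_eq_div_val, Units.val_inv_eq_inv_val] at h' ⊢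
    field_simp
    linear_combination (-1 : ℂ) * h'
  rw [hP]
  calc (∏ i ∈ Finset.range (m + 1), (L (g • x) g (g ^ i) / L x g (g ^ i)))
      = ∏ i ∈ Finset.range (m + 1), ((ω g (g ^ i) g)⁻¹
          * (L x (g ^ i) g / L x (g ^ (i + 1)) g)
          * (L x g (g ^ (i + 1)) / L x g (g ^ i))) := by
        exact Finset.prod_congr rfl fun i _ => hratio i
    _ = (∏ i ∈ Finset.range (m + 1), (ω g (g ^ i) g)⁻¹)
          * (∏ i ∈ Finset.range (m + 1), (L x (g ^ i) g / L x (g ^ (i + 1)) g))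
          * (∏ i ∈ Finset.range (m + 1), (L x g (g ^ (i + 1)) / L x g (g ^ i))) := by
        rw [Finset.prod_mul_distrib, Finset.prod_mul_distrib]
    _ = (∏ i ∈ Finset.range (m + 1), (ω g (g ^ i) g)⁻¹) := by
        have ha : (∏ i ∈ Finset.range (m + 1), (L x (g ^ i) g / L x (g ^ (i + 1)) g))
            = L x (g ^ 0) g / L x (g ^ (m + 1)) g :=
          Finset.prod_range_div' (fun j => L x (g ^ j) g) (m + 1)
        have hb : (∏ i ∈ Finset.range (m + 1), (L x g (g ^ (i + 1)) / L x g (g ^ i)))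
            = L x g (g ^ (m + 1)) / L x g (g ^ 0) :=
          Finset.prod_range_div (fun j => L x g (g ^ j)) (m + 1)
        rw [ha, hb, hgn, pow_zero, (hLnorm x g).2, (hLnorm x g).1]
        simp
    _ = ∏ i ∈ Finset.range (m + 1), (ω g (g ^ (i + 1)) g)⁻¹ := by
        rw [Finset.prod_range_succ', Finset.prod_range_succ]
        simp [hω1, hgn]
end

section
/- Let G be a group acting on a set I, let σ ∈ G satisfy σ·σ = e, let ω : G×G×G → ℂˣ, let L : I×G×G → ℂˣ be normalized L-symbols satisfying the coupled pentagon equation with respect to ω, and let B : G×I×I → ℂˣ satisfy the domain-wall fractionalization equation with respect to L. Then for every x ∈ I: B^σ_{σ·x,x} · B^σ_{x,σ·x} = L^{σ·x}_{σ,σ} / L^{x}_{σ,σ} = ω(σ,σ,σ)^{−1}. If moreover ω is a normalized 3-cocycle, then ω(σ,σ,σ)^{−1} = ω(σ,σ,σ), so the product of the two domain-wall exchange phases equals the anomaly ω(σ,σ,σ) = ±1 of the ℤ₂ symmetry. -/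
/-- For an order-two symmetry `σ`, the product of the two domain-wall
exchange phases equals the L-symbol ratio, which equals `ω(σ,σ,σ)⁻¹`; for a normalized
3-cocycle this equals the anomaly `ω(σ,σ,σ) = ±1`. -/
theorem z2_domain_wall_exchange_phase {G : Type*} [Group G] {I : Type*} [MulAction G I]
    (ω : G → G → G → ℂˣ) (L : I → G → G → ℂˣ) (B : G → I → I → ℂˣ)
    (σ : G) (hσ : σ * σ = 1)
    (hLnorm : ∀ (x : I) (g : G), L x g 1 = 1 ∧ L x 1 g = 1)
    (hpent : ∀ (g h k : G) (x : I),
      L x h k * L x g (h * k) = ω g h k * L (k • x) g h * L x (g * h) k)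
    (hfrac : ∀ (g h : G) (x y : I),
      B g (h • x) (h • y) * B h x y = (L x g h / L y g h) * B (g * h) x y)
    (x : I) :
    B σ (σ • x) x * B σ x (σ • x) = L (σ • x) σ σ / L x σ σ
    ∧ L (σ • x) σ σ / L x σ σ = (ω σ σ σ)⁻¹
    ∧ ((∀ g h k l : G,
          ω g h k * ω g (h * k) l * ω h k l = ω (g * h) k l * ω g h (k * l)) →
       (∀ g h k : G, g = 1 ∨ h = 1 ∨ k = 1 → ω g h k = 1) →
       (ω σ σ σ)⁻¹ = ω σ σ σ) := by
  have hσσ : ∀ y : I, σ • σ • y = y := by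
    intro y; rw [smul_smul, hσ, one_smul]
  have hB1 : ∀ y z : I, B 1 y z = 1 := by
    intro y z
    have h := hfrac 1 1 y z
    simp only [(hLnorm y 1).2, (hLnorm z 1).2, one_smul, mul_one, div_one, one_mul] at h
    exact mul_right_cancel (h.trans (one_mul _).symm)
  have hpart1 : B σ (σ • x) x * B σ x (σ • x) = L (σ • x) σ σ / L x σ σ := by
    have h := hfrac σ σ (σ • x) x
    rw [hσσ, hσ, hB1, mul_one] at h
    rw [mul_comm]; exact h
  have hpent' := hpent σ σ σ x
  rw [hσ, (hLnorm x σ).1, (hLnorm x σ).2, mul_one, mul_one] at hpent'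
  have hpart2 : L (σ • x) σ σ / L x σ σ = (ω σ σ σ)⁻¹ := by
    rw [hpent']
    rw [div_eq_iff_eq_mul]
    group
  refine ⟨hpart1, hpart2, fun hcoc hnorm => ?_⟩
  have h := hcoc σ σ σ σ
  rw [hσ, hnorm σ 1 σ (Or.inr (Or.inl rfl)), hnorm 1 σ σ (Or.inl rfl),
    hnorm σ σ 1 (Or.inr (Or.inr rfl)), mul_one, one_mul] at h
  rw [eq_comm]
  exact eq_inv_of_mul_eq_one_left h
end

section
/- Let n ≥ 1 and j be integers, let a ∈ ℤ/n, and let o denote the additive order of a in ℤ/n (so o = n/gcd(ā,n)). Then the domain-wall interchange phase for the anomalous ℤ_n symmetry labeled by j in the maximally symmetry-broken phase has the closed form ∏_{k=1}^{o} ω_j(a, k·a, a)^{−1} = exp(−2πi·j·ā²·o/n²), where k·a denotes the k-fold sum a+⋯+a in ℤ/n. -/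
/-- The explicit family of 3-cocycles `ω_j` on `ℤ/n`:
`ω_j(a,b,c) = exp((2πij/n²)·ā·(b̄ + c̄ − (b+c)‾))`, where `x̄ ∈ {0,…,n−1}` is the
canonical representative of `x ∈ ℤ/n`. -/
noncomputable def omegaJ (n : ℕ) (j : ℤ) (a b c : ZMod n) : ℂˣ :=
  Units.mk0
    (Complex.exp ((2 * Real.pi * Complex.I * (j : ℂ) / (n : ℂ) ^ 2) *
      ((a.val : ℂ)) *
      ((((b.val : ℤ) + (c.val : ℤ) - ((b + c).val : ℤ) : ℤ) : ℂ))))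
    (Complex.exp_ne_zero _)

/-- closed form for the domain-wall interchange phase of the anomalous
`ℤ_n` symmetry labeled by `j` in the fully symmetry-broken phase:
`∏_{k=1}^{o} ω_j(a, k·a, a)⁻¹ = exp(−2πi·j·ā²·o/n²)` where `o` is the additive
order of `a` in `ℤ/n`. -/
theorem domain_wall_interchange_phase_closed_form
    (n : ℕ) (hn : 1 ≤ n) (j : ℤ) (a : ZMod n) (o : ℕ) (ho : o = addOrderOf a) :
    ((∏ k ∈ Finset.range o, (omegaJ n j a ((k + 1) • a) a)⁻¹ : ℂˣ) : ℂ)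
      = Complex.exp
          (-(2 * Real.pi * Complex.I * (j : ℂ) * (a.val : ℂ) ^ 2 * (o : ℂ)
            / (n : ℂ) ^ 2)) := by
  set C : ℂ := 2 * Real.pi * Complex.I * (j : ℂ) / (n : ℂ) ^ 2 with hC
  have key : ∀ k : ℕ, ((omegaJ n j a ((k + 1) • a) a)⁻¹ : ℂ)
      = Complex.exp (-(C * (a.val : ℂ) *
        (((((k+1) • a).val : ℤ) + ((a.val : ℕ) : ℤ) - (((k+2) • a).val : ℤ) : ℤ) : ℂ))) := by
    intro k
    have hadd : (k + 1) • a + a = (k + 2) • a := (succ_nsmul a (k+1)).symm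
    simp only [omegaJ, hadd, Units.val_inv_eq_inv_val, Units.val_mk0, ← Complex.exp_neg, hC]
  have ho1 : (o + 1) • a = a := by
    rw [succ_nsmul, ho, addOrderOf_nsmul_eq_zero, zero_add]
  have hS : (∑ k ∈ Finset.range o,
      ((((k+1) • a).val : ℤ) + ((a.val : ℕ) : ℤ) - (((k+2) • a).val : ℤ)))
      = (o : ℤ) * (a.val : ℤ) := by
    have htel : ∑ k ∈ Finset.range o,
        (((((k+1) • a).val : ℕ) : ℤ) - ((((k+1+1) • a).val : ℕ) : ℤ))
        = ((((0+1) • a).val : ℕ) : ℤ) - ((((o+1) • a).val : ℕ) : ℤ) :=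
      Finset.sum_range_sub' (fun k => ((((k+1) • a).val : ℕ) : ℤ)) o
    rw [ho1] at htel
    simp only [zero_add, one_nsmul] at htel
    calc ∑ k ∈ Finset.range o,
        ((((k+1) • a).val : ℤ) + ((a.val : ℕ) : ℤ) - (((k+2) • a).val : ℤ))
        = (∑ k ∈ Finset.range o,
            (((((k+1) • a).val : ℕ) : ℤ) - ((((k+1+1) • a).val : ℕ) : ℤ)))
          + ∑ _k ∈ Finset.range o, ((a.val : ℕ) : ℤ) := by
            rw [← Finset.sum_add_distrib]
            apply Finset.sum_congr rfl
            intro k _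
            show _ = (((k+1) • a).val : ℤ) - (((k+2) • a).val : ℤ) + (a.val : ℤ)
            ring
      _ = (o : ℤ) * (a.val : ℤ) := by
            rw [htel, Finset.sum_const, Finset.card_range]
            push_cast
            ring
  calc ((∏ k ∈ Finset.range o, (omegaJ n j a ((k + 1) • a) a)⁻¹ : ℂˣ) : ℂ)
      = ∏ k ∈ Finset.range o, ((omegaJ n j a ((k + 1) • a) a)⁻¹ : ℂ) := by
        push_cast; rfl
    _ = ∏ k ∈ Finset.range o, Complex.exp (-(C * (a.val : ℂ) *
        (((((k+1) • a).val : ℤ) + ((a.val : ℕ) : ℤ) - (((k+2) • a).val : ℤ) : ℤ) : ℂ))) := by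
        exact Finset.prod_congr rfl fun k _ => key k
    _ = Complex.exp (∑ k ∈ Finset.range o, -(C * (a.val : ℂ) *
        (((((k+1) • a).val : ℤ) + ((a.val : ℕ) : ℤ) - (((k+2) • a).val : ℤ) : ℤ) : ℂ))) :=
        (Complex.exp_sum _ _).symm
    _ = Complex.exp (-(C * (a.val : ℂ) * (((∑ k ∈ Finset.range o,
        ((((k+1) • a).val : ℤ) + ((a.val : ℕ) : ℤ) - (((k+2) • a).val : ℤ)) : ℤ)) : ℂ))) := by
        congr 1
        rw [Finset.sum_neg_distrib]
        congr 1
        push_cast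
        rw [Finset.mul_sum]
    _ = Complex.exp (-(2 * Real.pi * Complex.I * (j : ℂ) * (a.val : ℂ) ^ 2 * (o : ℂ)
            / (n : ℂ) ^ 2)) := by
        rw [hS]
        push_cast
        congr 1
        rw [hC]
        ring
end

section
/- (Fundamental Theorem of MPS, injective case.) Let A be an injective MPS tensor with physical dimension d and bond dimension D_A, and let B be an injective MPS tensor with physical dimension d and bond dimension D_B. Suppose that A and B generate the same translation-invariant states on every system size, i.e. Tr[A^{i₁}A^{i₂}⋯A^{i_N}] = Tr[B^{i₁}B^{i₂}⋯B^{i_N}] for every N ≥ 1 and every index tuple (i₁,…,i_N) ∈ {1,…,d}^N. Then D_A = D_B and there exists an invertible D_A×D_A complex matrix V such that A^i = V·B^i·V^{−1} for all i = 1,…,d. -/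
open Matrix

namespace MPSFT

/-- Nondegeneracy of the trace pairing on complex matrices. -/
private lemma trace_nondeg {D : ℕ} {M : Matrix (Fin D) (Fin D) ℂ}
    (h : ∀ m : Matrix (Fin D) (Fin D) ℂ, (M * m).trace = 0) : M = 0 := by
  ext i j
  have h2 : (M * Matrix.single j i (1:ℂ)).trace = M i j := by
    rw [Matrix.trace, Finset.sum_eq_single i]
    · simp [Matrix.diag]
    · intro k _ hk
      simp [Matrix.diag, hk]
    · simp
  simp only [Matrix.zero_apply]
  rw [← h2]
  exact h _

/-- The submonoid of monomials in the free algebra. -/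
private def monoSubmonoid (d : ℕ) : Submonoid (FreeAlgebra ℂ (Fin d)) where
  carrier := {x | ∃ l : List (Fin d), x = (l.map (FreeAlgebra.ι ℂ)).prod}
  one_mem' := ⟨[], by simp⟩
  mul_mem' := by
    rintro x y ⟨l, rfl⟩ ⟨m, rfl⟩
    exact ⟨l ++ m, by simp⟩

private lemma span_monos (d : ℕ) :
    Submodule.span ℂ {x : FreeAlgebra ℂ (Fin d) |
      ∃ l : List (Fin d), x = (l.map (FreeAlgebra.ι ℂ)).prod} = ⊤ := by
  have h3 := Algebra.adjoin_eq_span ℂ (Set.range (FreeAlgebra.ι ℂ (X := Fin d)))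
  rw [FreeAlgebra.adjoin_range_ι] at h3
  refine le_antisymm le_top ?_
  have h4 : Submonoid.closure (Set.range (FreeAlgebra.ι ℂ (X := Fin d))) ≤ monoSubmonoid d :=
    Submonoid.closure_le.mpr (by rintro _ ⟨i, rfl⟩; exact ⟨[i], by simp⟩)
  have h5 : (⊤ : Submodule ℂ (FreeAlgebra ℂ (Fin d)))
      = Submodule.span ℂ
        (↑(Submonoid.closure (Set.range (FreeAlgebra.ι ℂ (X := Fin d))))
          : Set (FreeAlgebra ℂ (Fin d))) := by
    rw [← h3]; rfl
  rw [h5]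
  exact Submodule.span_mono h4

private lemma lift_mono {d D : ℕ} (A : Fin d → Matrix (Fin D) (Fin D) ℂ) (l : List (Fin d)) :
    FreeAlgebra.lift ℂ A ((l.map (FreeAlgebra.ι ℂ)).prod) = (l.map A).prod := by
  rw [map_list_prod, List.map_map]
  have h : (⇑(FreeAlgebra.lift ℂ A) ∘ FreeAlgebra.ι ℂ) = A := by
    funext i; simp
  rw [h]

/-- The key trace identity: traces against words agree after applying the two lifts. -/
private lemma key_trace {d DA DB : ℕ}
    (A : Fin d → Matrix (Fin DA) (Fin DA) ℂ) (B : Fin d → Matrix (Fin DB) (Fin DB) ℂ)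
    (heq' : ∀ m : List (Fin d), m ≠ [] → ((m.map A).prod).trace = ((m.map B).prod).trace)
    (x : FreeAlgebra ℂ (Fin d)) :
    ∀ m : List (Fin d), m ≠ [] →
      ((FreeAlgebra.lift ℂ A x) * (m.map A).prod).trace
        = ((FreeAlgebra.lift ℂ B x) * (m.map B).prod).trace := by
  have hx : x ∈ Submodule.span ℂ {x : FreeAlgebra ℂ (Fin d) |
      ∃ l : List (Fin d), x = (l.map (FreeAlgebra.ι ℂ)).prod} :=
    (span_monos d) ▸ Submodule.mem_top
  induction hx using Submodule.span_induction with
  | mem z hz =>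
    obtain ⟨l, rfl⟩ := hz
    intro m hm
    rw [lift_mono A l, lift_mono B l, ← List.prod_append, ← List.map_append,
      ← List.prod_append, ← List.map_append]
    exact heq' (l ++ m) (fun h => hm (List.append_eq_nil_iff.mp h).2)
  | zero => intro m hm; simp
  | add x y hx hy ihx ihy =>
    intro m hm
    rw [map_add, map_add, add_mul, add_mul, Matrix.trace_add, Matrix.trace_add,
      ihx m hm, ihy m hm]
  | smul c x hx ih =>
    intro m hm
    rw [_root_.map_smul, _root_.map_smul, smul_mul_assoc, smul_mul_assoc, Matrix.trace_smul,
      Matrix.trace_smul, ih m hm]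

/-- Kernel inclusion between the two lifts. -/
private lemma ker_le {d DA DB : ℕ}
    (A : Fin d → Matrix (Fin DA) (Fin DA) ℂ) (B : Fin d → Matrix (Fin DB) (Fin DB) ℂ)
    (hB : Submodule.span ℂ (Set.range B) = (⊤ : Submodule ℂ (Matrix (Fin DB) (Fin DB) ℂ)))
    (heq' : ∀ m : List (Fin d), m ≠ [] → ((m.map A).prod).trace = ((m.map B).prod).trace)
    (x : FreeAlgebra ℂ (Fin d)) (hx : FreeAlgebra.lift ℂ A x = 0) :
    FreeAlgebra.lift ℂ B x = 0 := by
  apply trace_nondeg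
  intro m
  have hm : m ∈ Submodule.span ℂ (Set.range B) := hB ▸ Submodule.mem_top
  induction hm using Submodule.span_induction with
  | mem z hz =>
    obtain ⟨j, rfl⟩ := hz
    have h1 := key_trace A B heq' x [j] (by simp)
    simp only [List.map_cons, List.map_nil, List.prod_cons, List.prod_nil, mul_one, hx,
      zero_mul, Matrix.trace_zero] at h1
    exact h1.symm
  | zero => simp
  | add a b _ _ iha ihb => rw [mul_add, Matrix.trace_add, iha, ihb, add_zero]
  | smul c a _ ih => rw [Matrix.mul_smul, Matrix.trace_smul, ih, smul_zero]

private lemma lift_surj {d D : ℕ} (A : Fin d → Matrix (Fin D) (Fin D) ℂ)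
    (hA : Submodule.span ℂ (Set.range A) = (⊤ : Submodule ℂ (Matrix (Fin D) (Fin D) ℂ))) :
    Function.Surjective (FreeAlgebra.lift ℂ A) := by
  intro a
  have h1 : Submodule.span ℂ (Set.range A)
      ≤ Subalgebra.toSubmodule (FreeAlgebra.lift ℂ A).range := by
    apply Submodule.span_le.mpr
    rintro _ ⟨i, rfl⟩
    exact ⟨FreeAlgebra.ι ℂ i, by simp⟩
  rw [hA] at h1
  exact h1 (Submodule.mem_top)

private lemma mul_E {D : ℕ} (x : Matrix (Fin D) (Fin D) ℂ) (c z : Fin D) :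
    x * Matrix.single c z 1 = ∑ k, x k c • Matrix.single k z 1 := by
  ext i j
  rw [Matrix.sum_apply]
  by_cases hj : j = z
  · subst hj
    rw [Matrix.mul_single_apply_same, mul_one, Finset.sum_eq_single i]
    · simp
    · intro k _ hk; simp [hk]
    · simp
  · rw [Matrix.mul_single_apply_of_ne (hbj := hj)]
    refine (Finset.sum_eq_zero fun k _ => ?_).symm
    simp [Ne.symm hj]

end MPSFT

/-- Fundamental Theorem of MPS, injective case: two injective MPS tensors
generating the same translation-invariant states on every system size have equal bond
dimensions and are related by conjugation with an invertible matrix. -/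
theorem fundamental_theorem_of_MPS_injective (d DA DB : ℕ)
    (A : Fin d → Matrix (Fin DA) (Fin DA) ℂ)
    (B : Fin d → Matrix (Fin DB) (Fin DB) ℂ)
    (hA : Submodule.span ℂ (Set.range A) = (⊤ : Submodule ℂ (Matrix (Fin DA) (Fin DA) ℂ)))
    (hB : Submodule.span ℂ (Set.range B) = (⊤ : Submodule ℂ (Matrix (Fin DB) (Fin DB) ℂ)))
    (heq : ∀ N : ℕ, 1 ≤ N → ∀ i : Fin N → Fin d,
      Matrix.trace (List.ofFn fun k => A (i k)).prod
        = Matrix.trace (List.ofFn fun k => B (i k)).prod) :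
    DA = DB ∧
      ∃ (V : Matrix (Fin DA) (Fin DB) ℂ) (Vinv : Matrix (Fin DB) (Fin DA) ℂ),
        V * Vinv = 1 ∧ Vinv * V = 1 ∧ ∀ i : Fin d, A i = V * B i * Vinv := by
  classical
  -- the list form of the trace hypothesis
  have heq' : ∀ m : List (Fin d), m ≠ [] →
      ((m.map A).prod).trace = ((m.map B).prod).trace := by
    intro m hm
    have hN : 1 ≤ m.length := List.length_pos_iff.mpr hm
    have h1 := heq m.length hN m.get
    have h2 : ∀ {D : ℕ} (C : Fin d → Matrix (Fin D) (Fin D) ℂ),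
        (List.ofFn fun k => C (m.get k)) = m.map C := by
      intro D C
      conv_rhs => rw [← List.ofFn_get m]
      rw [List.map_ofFn]
      rfl
    rwa [h2 A, h2 B] at h1
  have hkey := MPSFT.key_trace A B heq'
  have hkey' := MPSFT.key_trace B A (fun m hm => (heq' m hm).symm)
  have hBA : ∀ x, FreeAlgebra.lift ℂ A x = 0 → FreeAlgebra.lift ℂ B x = 0 :=
    fun x hx => MPSFT.ker_le A B hB heq' x hx
  have hAB : ∀ x, FreeAlgebra.lift ℂ B x = 0 → FreeAlgebra.lift ℂ A x = 0 :=
    fun x hx => MPSFT.ker_le B A hA (fun m hm => (heq' m hm).symm) x hx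
  have hsurjA := MPSFT.lift_surj A hA
  have hsurjB := MPSFT.lift_surj B hB
  have hkerEq : LinearMap.ker (FreeAlgebra.lift ℂ A :
        FreeAlgebra ℂ (Fin d) →ₐ[ℂ] Matrix (Fin DA) (Fin DA) ℂ).toLinearMap
      = LinearMap.ker (FreeAlgebra.lift ℂ B :
        FreeAlgebra ℂ (Fin d) →ₐ[ℂ] Matrix (Fin DB) (Fin DB) ℂ).toLinearMap := by
    ext x
    simp only [LinearMap.mem_ker, AlgHom.toLinearMap_apply]
    exact ⟨hBA x, hAB x⟩
  -- build the linear equivalence φ with φ (ΨA x) = ΨB x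
  obtain ⟨φ, hφ⟩ : ∃ φ : Matrix (Fin DA) (Fin DA) ℂ ≃ₗ[ℂ] Matrix (Fin DB) (Fin DB) ℂ,
      ∀ x, φ (FreeAlgebra.lift ℂ A x) = FreeAlgebra.lift ℂ B x := by
    set fA := (FreeAlgebra.lift ℂ A :
      FreeAlgebra ℂ (Fin d) →ₐ[ℂ] Matrix (Fin DA) (Fin DA) ℂ).toLinearMap with hfA
    set fB := (FreeAlgebra.lift ℂ B :
      FreeAlgebra ℂ (Fin d) →ₐ[ℂ] Matrix (Fin DB) (Fin DB) ℂ).toLinearMap with hfB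
    have hsA : Function.Surjective fA := hsurjA
    have hsB : Function.Surjective fB := hsurjB
    let eA : (FreeAlgebra ℂ (Fin d) ⧸ LinearMap.ker fA) ≃ₗ[ℂ] Matrix (Fin DA) (Fin DA) ℂ :=
      fA.quotKerEquivOfSurjective hsA
    let eB : (FreeAlgebra ℂ (Fin d) ⧸ LinearMap.ker fB) ≃ₗ[ℂ] Matrix (Fin DB) (Fin DB) ℂ :=
      fB.quotKerEquivOfSurjective hsB
    have heA : ∀ x, eA (Submodule.Quotient.mk x) = FreeAlgebra.lift ℂ A x := by
      intro x
      simp [eA, LinearMap.quotKerEquivOfSurjective,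
        LinearMap.quotKerEquivRange_apply_mk, LinearEquiv.ofTop_apply]
      rfl
    have heB : ∀ x, eB (Submodule.Quotient.mk x) = FreeAlgebra.lift ℂ B x := by
      intro x
      simp [eB, LinearMap.quotKerEquivOfSurjective,
        LinearMap.quotKerEquivRange_apply_mk, LinearEquiv.ofTop_apply]
      rfl
    refine ⟨eA.symm.trans ((Submodule.quotEquivOfEq _ _ hkerEq).trans eB), ?_⟩
    intro x
    have h1 : eA.symm (FreeAlgebra.lift ℂ A x) = Submodule.Quotient.mk x := by
      rw [← heA x, LinearEquiv.symm_apply_apply]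
    simp [LinearEquiv.trans_apply, h1, Submodule.quotEquivOfEq_mk, heB]
  -- equal bond dimensions
  have hDD : DA = DB := by
    have h1 := φ.finrank_eq
    rw [Module.finrank_matrix, Module.finrank_matrix] at h1
    simp only [Fintype.card_fin, Module.finrank_self, mul_one] at h1
    exact Nat.mul_self_inj.mp h1
  refine ⟨hDD, ?_⟩
  -- multiplicativity and action on the generators
  have hφmul : ∀ a b, φ (a * b) = φ a * φ b := by
    intro a b
    obtain ⟨x, rfl⟩ := hsurjA a
    obtain ⟨y, rfl⟩ := hsurjA b
    rw [← _root_.map_mul, hφ, _root_.map_mul, hφ, hφ]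
  have hφA : ∀ i, φ (A i) = B i := by
    intro i
    have := hφ (FreeAlgebra.ι ℂ i)
    simpa using this
  -- degenerate case
  rcases Nat.eq_zero_or_pos DA with h0 | hpos
  · subst h0
    have h0' : DB = 0 := hDD.symm
    subst h0'
    exact ⟨0, 0, Subsingleton.elim _ _, Subsingleton.elim _ _,
      fun i => Subsingleton.elim _ _⟩
  -- main case: build the intertwiner
  · set z : Fin DA := ⟨0, hpos⟩ with hz
    set p := φ (Matrix.single z z 1) with hp
    have hp2 : p * p = p := by
      rw [hp, ← hφmul, Matrix.single_mul_single_same, one_mul]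
    have hpne : p ≠ 0 := by
      intro hcon
      have h1 : Matrix.single z z (1 : ℂ) = 0 := by
        apply φ.injective
        rw [← hp, hcon, map_zero]
      have h2 := congrFun (congrFun h1 z) z
      simp at h2
    obtain ⟨w, hw⟩ : ∃ w, p.mulVec w ≠ 0 := by
      by_contra hcon
      push_neg at hcon
      apply hpne
      ext i j
      have h1 := congrFun (hcon (Pi.single j 1)) i
      simpa [Matrix.mulVec_single] using h1
    set u := p.mulVec w with hu
    have hpu : p.mulVec u = u := by
      rw [hu, Matrix.mulVec_mulVec, hp2]
    set W : Matrix (Fin DB) (Fin DA) ℂ :=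
      Matrix.of fun r c => (φ (Matrix.single c z 1)).mulVec u r with hW
    -- mulVec formula for W
    have hWmulVec : ∀ v : Fin DA → ℂ,
        W.mulVec v = (φ (∑ c, v c • Matrix.single c z 1)).mulVec u := by
      intro v
      ext r
      rw [map_sum]
      simp only [hW, Matrix.mulVec, dotProduct, Matrix.of_apply, _root_.map_smul,
        Matrix.sum_apply, Matrix.smul_apply, smul_eq_mul, Finset.sum_mul]
      rw [Finset.sum_comm]
      apply Finset.sum_congr rfl
      intro c _
      apply Finset.sum_congr rfl
      intro t _
      ring
    -- intertwining relation
    have hWx : ∀ x : Matrix (Fin DA) (Fin DA) ℂ, φ x * W = W * x := by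
      intro x
      ext r c
      have h1 : (W * x) r c = (W.mulVec fun k => x k c) r := by
        simp [Matrix.mul_apply, Matrix.mulVec, dotProduct]
      rw [h1, hWmulVec, ← MPSFT.mul_E x c z, hφmul]
      simp [hW, Matrix.mul_apply, Matrix.mulVec, dotProduct, Finset.mul_sum,
        Finset.sum_mul, mul_assoc]
      rw [Finset.sum_comm]
    -- injectivity of W
    have hWinj : Function.Injective (Matrix.toLin' W) := by
      rw [injective_iff_map_eq_zero]
      intro v hv
      rw [Matrix.toLin'_apply, hWmulVec] at hv
      funext j
      have h2 : Matrix.single z j (1 : ℂ) * (∑ c, v c • Matrix.single c z 1)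
          = v j • Matrix.single z z 1 := by
        rw [Finset.mul_sum]
        rw [Finset.sum_eq_single j]
        · rw [Matrix.mul_smul, Matrix.single_mul_single_same, one_mul]
        · intro k _ hk
          rw [Matrix.mul_smul, Matrix.single_mul_single_of_ne (h := Ne.symm hk), smul_zero]
        · simp
      have h3 : (φ (Matrix.single z j 1)).mulVec
          ((φ (∑ c, v c • Matrix.single c z 1)).mulVec u) = v j • u := by
        rw [Matrix.mulVec_mulVec, ← hφmul, h2, _root_.map_smul, ← hp,
          Matrix.smul_mulVec, hpu]
      rw [hv, Matrix.mulVec_zero] at h3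
      rcases smul_eq_zero.mp h3.symm with h | h
      · exact h
      · exact absurd h hw
    -- surjectivity from equal dimensions
    have hWsurj : Function.Surjective (Matrix.toLin' W) := by
      have hfr : Module.finrank ℂ (Fin DA → ℂ) = Module.finrank ℂ (Fin DB → ℂ) := by
        rw [Module.finrank_fin_fun, Module.finrank_fin_fun, hDD]
      exact (LinearMap.injective_iff_surjective_of_finrank_eq_finrank hfr).mp hWinj
    let e := LinearEquiv.ofBijective (Matrix.toLin' W) ⟨hWinj, hWsurj⟩
    set Winv : Matrix (Fin DA) (Fin DB) ℂ :=
      LinearMap.toMatrix' (e.symm : (Fin DB → ℂ) →ₗ[ℂ] (Fin DA → ℂ)) with hWinv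
    have h1 : Winv * W = 1 := by
      apply Matrix.toLin'.injective
      rw [Matrix.toLin'_mul, Matrix.toLin'_one, hWinv, Matrix.toLin'_toMatrix']
      refine LinearMap.ext fun y => ?_
      show e.symm (Matrix.toLin' W y) = y
      have h0 : Matrix.toLin' W y = e y := rfl
      rw [h0, e.symm_apply_apply]
    have h2 : W * Winv = 1 := by
      apply Matrix.toLin'.injective
      rw [Matrix.toLin'_mul, Matrix.toLin'_one, hWinv, Matrix.toLin'_toMatrix']
      refine LinearMap.ext fun y => ?_
      show Matrix.toLin' W (e.symm y) = y
      have h0 : Matrix.toLin' W (e.symm y) = e (e.symm y) := rfl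
      rw [h0, e.apply_symm_apply]
    refine ⟨Winv, W, h1, h2, ?_⟩
    intro i
    have h4 : B i * W = W * A i := by
      rw [← hφA i, hWx (A i)]
    calc A i = (Winv * W) * A i := by rw [h1, one_mul]
      _ = Winv * (B i * W) := by rw [Matrix.mul_assoc, h4]
      _ = Winv * B i * W := by rw [Matrix.mul_assoc]
end

section
/- (Uniqueness part of the Fundamental Theorem of MPS.) Let B be an injective MPS tensor with physical dimension d and bond dimension D, and let V and W be invertible D×D complex matrices such that V·B^i·V^{−1} = W·B^i·W^{−1} for all i = 1,…,d. Then there exists a nonzero scalar λ ∈ ℂˣ with W = λ·V; equivalently, V·B^i = λ^{−1}·W·B^i and B^i·V^{−1} = λ·B^i·W^{−1} for all i. -/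
/-- Uniqueness part of the Fundamental Theorem of MPS: if two invertible
matrices conjugate an injective MPS tensor in the same way, they agree up to a nonzero
scalar. -/
theorem fundamental_theorem_of_MPS_uniqueness (d D : ℕ)
    (B : Fin d → Matrix (Fin D) (Fin D) ℂ)
    (hB : Submodule.span ℂ (Set.range B) = (⊤ : Submodule ℂ (Matrix (Fin D) (Fin D) ℂ)))
    (V W : Matrix (Fin D) (Fin D) ℂ) (hV : IsUnit V) (hW : IsUnit W)
    (h : ∀ i : Fin d, V * B i * V⁻¹ = W * B i * W⁻¹) :
    ∃ lam : ℂˣ,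
      W = (lam : ℂ) • V
      ∧ (∀ i : Fin d, V * B i = ((lam⁻¹ : ℂˣ) : ℂ) • (W * B i))
      ∧ (∀ i : Fin d, B i * V⁻¹ = (lam : ℂ) • (B i * W⁻¹)) := by
  rcases Nat.eq_zero_or_pos D with hD | hD
  · subst hD
    refine ⟨1, ?_, fun i => ?_, fun i => ?_⟩ <;>
      · ext i j; exact absurd i.2 (by omega)
  haveI : Nonempty (Fin D) := ⟨⟨0, hD⟩⟩
  have hVd : IsUnit V.det := (Matrix.isUnit_iff_isUnit_det V).mp hV
  have hWd : IsUnit W.det := (Matrix.isUnit_iff_isUnit_det W).mp hW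
  set M : Matrix (Fin D) (Fin D) ℂ := W⁻¹ * V with hM
  -- M commutes with each B i
  have hcommB : ∀ i, M * B i = B i * M := by
    intro i
    have h1 : V * B i = W * B i * (W⁻¹ * V) := by
      have := congrArg (· * V) (h i)
      simpa [mul_assoc, Matrix.nonsing_inv_mul V hVd] using this
    calc M * B i = W⁻¹ * (V * B i) := by rw [hM, mul_assoc]
      _ = W⁻¹ * W * (B i * (W⁻¹ * V)) := by rw [h1]; noncomm_ring
      _ = B i * M := by rw [Matrix.nonsing_inv_mul W hWd, one_mul, hM]
  have hcomm : ∀ X : Matrix (Fin D) (Fin D) ℂ, M * X = X * M := by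
    intro X
    have hX : X ∈ Submodule.span ℂ (Set.range B) := by rw [hB]; trivial
    induction hX using Submodule.span_induction with
    | mem x hx => obtain ⟨i, rfl⟩ := hx; exact hcommB i
    | zero => simp
    | add x y _ _ hx hy => rw [mul_add, add_mul, hx, hy]
    | smul c x _ hx => rw [Matrix.mul_smul, Matrix.smul_mul, hx]
  obtain ⟨α, hα⟩ := Matrix.mem_range_scalar_of_commute_single
    (M := M) (fun i j _ => (hcomm _).symm)
  -- M = α • 1, so V = α • W
  have hMscalar : M = α • (1 : Matrix (Fin D) (Fin D) ℂ) := by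
    rw [← hα]
    ext i j
    simp [Matrix.scalar_apply, Matrix.one_apply, Matrix.diagonal_apply]
  have hVW : V = α • W := by
    have := congrArg (W * ·) hMscalar
    simpa [hM, ← mul_assoc, Matrix.mul_nonsing_inv W hWd, Matrix.mul_smul] using this
  have hα0 : α ≠ 0 := by
    rintro rfl
    rw [hVW, zero_smul, Matrix.det_zero] at hVd
    exact hVd.ne_zero rfl
  refine ⟨(Units.mk0 α hα0)⁻¹, ?_, fun i => ?_, fun i => ?_⟩
  · simp [hVW, smul_smul, inv_mul_cancel₀ hα0]
  · simp [hVW, Matrix.smul_mul, smul_smul, inv_mul_cancel₀ hα0]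
  · have hWinv : W⁻¹ = α • V⁻¹ := by
      letI : Invertible α := invertibleOfNonzero hα0
      rw [hVW, Matrix.inv_smul (A := W) α hWd, smul_smul, mul_invOf_self, one_smul]
    rw [hWinv, Units.val_inv_eq_inv_val, Units.val_mk0, Matrix.mul_smul, smul_smul,
      inv_mul_cancel₀ hα0, one_smul]
end

section
/- (The domain-wall exchange phase depends only on the cohomology class of the anomaly.) Let G be a group, let β : G×G → ℂˣ be arbitrary, and let dβ denote its coboundary, dβ(g,h,k) = β(h,k)·β(g,hk)·β(g,h)^{−1}·β(gh,k)^{−1}. Then for every g ∈ G of finite order n, ∏_{i=1}^{n} dβ(g,gⁱ,g) = 1. Consequently, if ω′(g,h,k) = ω(g,h,k)·dβ(g,h,k) is cohomologous to ω, then ∏_{i=1}^{n} ω′(g,gⁱ,g)^{−1} = ∏_{i=1}^{n} ω(g,gⁱ,g)^{−1}. -/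
/-- The domain-wall exchange phase depends only on the cohomology class
of the anomaly: the coboundary `dβ` contributes trivially to the phase
`∏_{i=1}^{n} ω(g,gⁱ,g)⁻¹`, so cohomologous 3-cochains give the same phase. -/
theorem exchange_phase_depends_only_on_cohomology_class {G : Type*} [Group G]
    (β : G → G → ℂˣ) (dβ : G → G → G → ℂˣ)
    (hdβ : ∀ g h k : G,
      dβ g h k = β h k * β g (h * k) * (β g h)⁻¹ * (β (g * h) k)⁻¹)
    (g : G) (n : ℕ) (hn : 1 ≤ n) (hgn : g ^ n = 1)
    (hmin : ∀ m : ℕ, 1 ≤ m → m < n → g ^ m ≠ 1) :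
    (∏ i ∈ Finset.range n, dβ g (g ^ (i + 1)) g) = 1
    ∧ ∀ ω ω' : G → G → G → ℂˣ,
        (∀ a b c : G, ω' a b c = ω a b c * dβ a b c) →
        (∏ i ∈ Finset.range n, (ω' g (g ^ (i + 1)) g)⁻¹)
          = ∏ i ∈ Finset.range n, (ω g (g ^ (i + 1)) g)⁻¹ := by
  have key : (∏ i ∈ Finset.range n, dβ g (g ^ (i + 1)) g) = 1 := by
    have h1 : ∀ i : ℕ, dβ g (g ^ (i + 1)) g
        = (β g (g ^ (i + 2)) / β g (g ^ (i + 1)))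
          * (β (g ^ (i + 1)) g / β (g ^ (i + 2)) g) := by
      intro i
      have e1 : g * g ^ (i + 1) = g ^ (i + 2) := by
        rw [← pow_succ']
      have e2 : g ^ (i + 1) * g = g ^ (i + 2) := by
        rw [← pow_succ]
      rw [hdβ, e1, e2, div_mul_div_comm]
      simp only [div_eq_mul_inv, mul_inv]
      ac_rfl
    rw [Finset.prod_congr rfl (fun i _ => h1 i), Finset.prod_mul_distrib,
      Finset.prod_range_div (fun i => β g (g ^ (i + 1))),
      Finset.prod_range_div' (fun i => β (g ^ (i + 1)) g)]
    have en : g ^ (n + 1) = g ^ (0 + 1) := by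
      rw [pow_succ, hgn, one_mul, zero_add, pow_one]
    rw [en]
    simp
  refine ⟨key, fun ω ω' hωω' => ?_⟩
  have : (∏ i ∈ Finset.range n, (ω' g (g ^ (i + 1)) g)⁻¹)
      = (∏ i ∈ Finset.range n, (ω g (g ^ (i + 1)) g)⁻¹)
        * (∏ i ∈ Finset.range n, dβ g (g ^ (i + 1)) g)⁻¹ := by
    rw [← Finset.prod_inv_distrib, ← Finset.prod_mul_distrib]
    exact Finset.prod_congr rfl fun i _ => by rw [hωω', mul_inv]
  rw [this, key, inv_one, mul_one]
end

section
/- (The L-symbol ratio is a 2-cocycle on the unbroken symmetry group.) Let G be a group acting on a set I, let ω : G×G×G → ℂˣ, and let L : I×G×G → ℂˣ satisfy the coupled pentagon equation with respect to ω. Fix x,y ∈ I and define α(g,h) = L^{y}_{g,h}/L^{x}_{g,h}. Then for all h₁,h₂,h₃ ∈ G with h₃·x = x and h₃·y = y, the 2-cocycle identity holds: α(h₁,h₂)·α(h₁h₂,h₃) = α(h₂,h₃)·α(h₁,h₂h₃). -/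
/-- The L-symbol ratio is a 2-cocycle on the unbroken symmetry group:
with `α(g,h) = L^{y}_{g,h}/L^{x}_{g,h}`, for all `h₁,h₂,h₃` with `h₃` fixing `x` and `y`,
`α(h₁,h₂)·α(h₁h₂,h₃) = α(h₂,h₃)·α(h₁,h₂h₃)`. -/
theorem L_ratio_is_two_cocycle {G : Type*} [Group G] {I : Type*} [MulAction G I]
    (ω : G → G → G → ℂˣ) (L : I → G → G → ℂˣ)
    (hpent : ∀ (g h k : G) (x : I),
      L x h k * L x g (h * k) = ω g h k * L (k • x) g h * L x (g * h) k)
    (x y : I) (α : G → G → ℂˣ)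
    (hα : ∀ g h : G, α g h = L y g h / L x g h) :
    ∀ h₁ h₂ h₃ : G, h₃ • x = x → h₃ • y = y →
      α h₁ h₂ * α (h₁ * h₂) h₃ = α h₂ h₃ * α h₁ (h₂ * h₃) := by
  intro h₁ h₂ h₃ hx hy
  have Hy := hpent h₁ h₂ h₃ y
  have Hx := hpent h₁ h₂ h₃ x
  rw [hy] at Hy
  rw [hx] at Hx
  simp only [hα]
  rw [div_mul_div_comm, div_mul_div_comm]
  rw [show L y h₂ h₃ * L y h₁ (h₂ * h₃) = ω h₁ h₂ h₃ * (L y h₁ h₂ * L y (h₁ * h₂) h₃) by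
    rw [Hy, mul_assoc]]
  rw [show L x h₂ h₃ * L x h₁ (h₂ * h₃) = ω h₁ h₂ h₃ * (L x h₁ h₂ * L x (h₁ * h₂) h₃) by
    rw [Hx, mul_assoc]]
  exact (mul_div_mul_left_eq_div _ _ _).symm
end

section
/- (The anomaly is trivial on the unbroken symmetry group.) Let G be a group acting on a set I, let ω : G×G×G → ℂˣ, and let L : I×G×G → ℂˣ satisfy the coupled pentagon equation with respect to ω. Fix x ∈ I. Then for all h₁,h₂,h₃ ∈ G with h₃·x = x, one has ω(h₁,h₂,h₃) = L^{x}_{h₂,h₃}·L^{x}_{h₁,h₂h₃}·(L^{x}_{h₁,h₂})^{−1}·(L^{x}_{h₁h₂,h₃})^{−1}. In particular, restricted to any subgroup H ≤ G that fixes x, ω is the coboundary of the 2-cochain (h,h′) ↦ L^{x}_{h,h′}, hence defines the trivial class in H³(H,U(1)). -/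
/-- The anomaly is trivial on the unbroken symmetry group: if `h₃` fixes
`x`, then `ω(h₁,h₂,h₃)` is the coboundary of the 2-cochain `(h,h′) ↦ L^{x}_{h,h′}`. -/
theorem anomaly_trivial_on_unbroken_subgroup {G : Type*} [Group G] {I : Type*}
    [MulAction G I]
    (ω : G → G → G → ℂˣ) (L : I → G → G → ℂˣ)
    (hpent : ∀ (g h k : G) (x : I),
      L x h k * L x g (h * k) = ω g h k * L (k • x) g h * L x (g * h) k)
    (x : I) :
    ∀ h₁ h₂ h₃ : G, h₃ • x = x →
      ω h₁ h₂ h₃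
        = L x h₂ h₃ * L x h₁ (h₂ * h₃) * (L x h₁ h₂)⁻¹ * (L x (h₁ * h₂) h₃)⁻¹ := by
  intro h₁ h₂ h₃ hx
  have h := hpent h₁ h₂ h₃ x
  rw [hx] at h
  rw [h, mul_right_comm _ (L x (h₁ * h₂) h₃), mul_inv_cancel_right, mul_inv_cancel_right]
end

section
/- Let k ≥ 1 and let λ₁,…,λ_k ∈ ℂ be complex numbers such that |λ₁^N + λ₂^N + ⋯ + λ_k^N| = 1 for every integer N ≥ 1. Then there is exactly one index i with λ_i ≠ 0, and this λ_i has modulus 1. In particular, if an injective matrix product state |ψ_B⟩ is reached from a state by a unitary for every system size with proportionality constants c_N = Σ_i λ_i^N of modulus 1, then c_N = λ^N for a single phase λ. -/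
open Finset

/-- Generalized Vandermonde: if a finite set of nonzero complex numbers satisfies
a linear relation among its powers `n ≥ 1`, all coefficients vanish. -/
lemma vand_aux (s : Finset ℂ) (hs : ∀ v ∈ s, v ≠ 0) (c : ℂ → ℂ)
    (h : ∀ n : ℕ, 1 ≤ n → ∑ v ∈ s, c v * v ^ n = 0) :
    ∀ v ∈ s, c v = 0 := by
  classical
  induction s using Finset.induction_on generalizing c with
  | empty => intro v hv; simp at hv
  | @insert w t hw ih =>
    have hw0 : w ≠ 0 := hs w (mem_insert_self _ _)
    have ht0 : ∀ v ∈ t, v ≠ 0 := fun v hv => hs v (mem_insert_of_mem hv)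
    have h' : ∀ n : ℕ, 1 ≤ n → ∑ v ∈ t, (c v * (w - v)) * v ^ n = 0 := by
      intro n hn
      have e1 := h n hn
      have e2 := h (n + 1) (by omega)
      have key : ∑ v ∈ insert w t, (c v * (w - v)) * v ^ n
          = w * ∑ v ∈ insert w t, c v * v ^ n - ∑ v ∈ insert w t, c v * v ^ (n + 1) := by
        rw [Finset.mul_sum, ← Finset.sum_sub_distrib]
        exact Finset.sum_congr rfl fun v _ => by ring
      rw [e1, e2, mul_zero, sub_zero, Finset.sum_insert hw] at key
      simpa using key
    have ht := ih ht0 _ h'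
    have hct : ∀ v ∈ t, c v = 0 := by
      intro v hv
      have hvw : w - v ≠ 0 := sub_ne_zero.mpr fun hwv => hw (hwv ▸ hv)
      have := ht v hv
      rcases mul_eq_zero.mp this with h0 | h0
      · exact h0
      · exact absurd h0 hvw
    have hcw : c w = 0 := by
      have e1 := h 1 le_rfl
      rw [Finset.sum_insert hw] at e1
      rw [Finset.sum_eq_zero (fun v hv => by rw [hct v hv, zero_mul])] at e1
      rw [add_zero, pow_one] at e1
      rcases mul_eq_zero.mp e1 with h0 | h0
      · exact h0
      · exact absurd h0 hw0
    intro v hv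
    rcases Finset.mem_insert.mp hv with rfl | hv
    · exact hcw
    · exact hct v hv

/-- if the power sums `Σ_i λ_i^N` have modulus exactly 1 for every
`N ≥ 1`, then exactly one `λ_i` is nonzero, and it has modulus 1. -/
theorem power_sums_modulus_one_single_phase (k : ℕ) (hk : 1 ≤ k) (lam : Fin k → ℂ)
    (h : ∀ N : ℕ, 1 ≤ N → ‖∑ i : Fin k, lam i ^ N‖ = 1) :
    ∃ i : Fin k, lam i ≠ 0 ∧ ‖lam i‖ = 1
      ∧ ∀ j : Fin k, j ≠ i → lam j = 0 := by
  classical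
  set f : Fin k × Fin k → ℂ := fun p => lam p.1 * (starRingEnd ℂ) (lam p.2) with hf
  have key : ∀ n : ℕ, 1 ≤ n → ∑ p : Fin k × Fin k, f p ^ n = 1 := by
    intro n hn
    have e : ∑ p : Fin k × Fin k, f p ^ n
        = (∑ i : Fin k, lam i ^ n) * (starRingEnd ℂ) (∑ i : Fin k, lam i ^ n) := by
      rw [map_sum, Finset.sum_mul_sum, ← Finset.sum_product']
      rw [show (Finset.univ ×ˢ Finset.univ : Finset (Fin k × Fin k)) = Finset.univ from rfl]
      exact Finset.sum_congr rfl fun p _ => by simp [hf, mul_pow, map_pow]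
    rw [e, Complex.mul_conj, Complex.normSq_eq_norm_sq, h n hn]
    norm_num
  set u : Finset ℂ := insert 1 (Finset.univ.image f) with hu
  set c : ℂ → ℂ := fun v =>
    (((Finset.univ.filter (fun p => f p = v)).card : ℂ) - if v = 1 then 1 else 0) with hc
  set s : Finset ℂ := u.filter (· ≠ 0) with hs
  have hrel : ∀ n : ℕ, 1 ≤ n → ∑ v ∈ s, c v * v ^ n = 0 := by
    intro n hn
    have h1 : ∑ v ∈ s, c v * v ^ n = ∑ v ∈ u, c v * v ^ n := by
      apply Finset.sum_subset (Finset.filter_subset _ _)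
      intro v hv hvs
      have hv0 : v = 0 := by
        by_contra h0
        exact hvs (Finset.mem_filter.mpr ⟨hv, h0⟩)
      rw [hv0, zero_pow (by omega), mul_zero]
    have h2 : ∑ v ∈ u, ((Finset.univ.filter (fun p => f p = v)).card : ℂ) * v ^ n
        = ∑ p : Fin k × Fin k, f p ^ n := by
      rw [Finset.sum_comp (fun v : ℂ => v ^ n) f]
      simp only [nsmul_eq_mul]
      symm
      apply Finset.sum_subset (Finset.subset_insert _ _)
      intro v hv hvi
      have : (Finset.univ.filter (fun p => f p = v)).card = 0 := by
        rw [Finset.card_eq_zero, Finset.filter_eq_empty_iff]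
        intro p _
        intro hp
        exact hvi (Finset.mem_image.mpr ⟨p, Finset.mem_univ p, hp⟩)
      simp [this]
    have h3 : ∑ v ∈ u, (if v = 1 then (1 : ℂ) else 0) * v ^ n = 1 := by
      rw [Finset.sum_congr rfl (fun v _ => show (if v = 1 then (1:ℂ) else 0) * v ^ n
          = if v = 1 then v ^ n else 0 by split <;> simp)]
      rw [Finset.sum_ite_eq' u 1 (fun v => v ^ n)]
      simp [hu]
    have : ∑ v ∈ u, c v * v ^ n
        = (∑ v ∈ u, ((Finset.univ.filter (fun p => f p = v)).card : ℂ) * v ^ n)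
          - ∑ v ∈ u, (if v = 1 then (1 : ℂ) else 0) * v ^ n := by
      rw [← Finset.sum_sub_distrib]
      refine Finset.sum_congr rfl fun v _ => ?_
      simp only [hc]
      ring
    rw [h1, this, h2, h3, key n hn, sub_self]
  have hzero := vand_aux s (fun v hv => (Finset.mem_filter.mp hv).2) c hrel
  -- 1 is in s
  have h1s : (1 : ℂ) ∈ s := Finset.mem_filter.mpr ⟨Finset.mem_insert_self _ _, one_ne_zero⟩
  have hcard1 : (Finset.univ.filter (fun p => f p = 1)).card = 1 := by
    have := hzero 1 h1s
    simp only [hc, if_pos rfl, sub_eq_zero] at this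
    exact_mod_cast this
  have hB : ∀ p : Fin k × Fin k, f p ≠ 0 → f p = 1 := by
    intro p hp
    by_contra hp1
    have hmem : f p ∈ s := Finset.mem_filter.mpr
      ⟨Finset.mem_insert_of_mem (Finset.mem_image.mpr ⟨p, Finset.mem_univ p, rfl⟩), hp⟩
    have := hzero (f p) hmem
    simp only [hc, if_neg hp1, sub_zero, Nat.cast_eq_zero, Finset.card_eq_zero,
      Finset.filter_eq_empty_iff] at this
    exact this (Finset.mem_univ p) rfl
  -- existence of a nonzero lam
  have hex : ∃ i : Fin k, lam i ≠ 0 := by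
    by_contra hall
    push_neg at hall
    have : (∑ i : Fin k, lam i ^ 1) = 0 :=
      Finset.sum_eq_zero fun i _ => by simp [hall i]
    have h1 := h 1 le_rfl
    rw [this] at h1
    simp at h1
  obtain ⟨i, hi⟩ := hex
  have hfii : f (i, i) ≠ 0 := by
    simp only [hf]
    rw [Complex.mul_conj]
    have hn0 : Complex.normSq (lam i) ≠ 0 := fun h0 => hi (Complex.normSq_eq_zero.mp h0)
    exact_mod_cast hn0
  have hfi1 : f (i, i) = 1 := hB _ hfii
  have habs : ‖lam i‖ = 1 := by
    have : ((Complex.normSq (lam i) : ℝ) : ℂ) = 1 := by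
      rw [← Complex.mul_conj]; exact hfi1
    have hn : Complex.normSq (lam i) = 1 := by exact_mod_cast this
    rw [Complex.norm_def, hn, Real.sqrt_one]
  refine ⟨i, hi, habs, ?_⟩
  intro j hj
  by_contra hj0
  have hfjj : f (j, j) = 1 := by
    apply hB
    simp only [hf]
    rw [Complex.mul_conj]
    have hn0 : Complex.normSq (lam j) ≠ 0 := fun h0 => hj0 (Complex.normSq_eq_zero.mp h0)
    exact_mod_cast hn0
  have hle := Finset.card_le_one.mp (le_of_eq hcard1)
  have := hle (j, j) (Finset.mem_filter.mpr ⟨Finset.mem_univ _, hfjj⟩)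
    (i, i) (Finset.mem_filter.mpr ⟨Finset.mem_univ _, hfi1⟩)
  exact hj (congrArg Prod.fst this)
end
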